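/- (Proposition 1) Assume r and t are compatible (r_i ≤ r_{i''} ⇔ t_i ≤ t_{i''} for all i, i'' ∈ Ī) and e_{i'} ≥ r_i for all i, i' ∈ Ī. Let ī* ∈ Ī minimize e over Ī; let k̄* : {1,…,L} → Ī be an injective map listing L suppliers with nondecreasing regular costs r_{k̄*(1)} ≤ … ≤ r_{k̄*(L)} and such that r_{k̄*(L)} ≤ r_i for every i ∈ Ī outside the range of k̄*; and let S̄* ∈ {0,…,S̄} minimize S ↦ C̄(k̄*, ī*, S) over {0,…,S̄}. Then (k̄*, ī*, S̄*) attains the global minimum of C̄(k, i', S) over all injective k : {1,…,L} → Ī, all i' ∈ Ī, and all S ∈ {0,…,S̄}. -/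

import Mathlib

/-!
For fixed `S` the cost is increasing in the expedited cost `e i'`, which only multiplies
nonnegative stock-out probabilities, so `istar` is the best expedited supplier. For fixed
expedited supplier, level `l` carries the weight `(1 - q) q ^ l`, decreasing in `l`, times a
per-level cost that increases with the regular cost of its supplier: by compatibility a
cheaper supplier is also faster, hence stocks out less often, and a stock-out is paid at the
expedited price `e ≥ r`. Sorting an injective `k` by regular cost, its `l`-th entry is at least
as expensive as `kstar l` (a counting argument), and by the rearrangement inequality the
sorted order is the cheapest order of the suppliers of `k`. Finally `Sstar` is optimal for
`(kstar, istar)` by assumption.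
-/

/-- Truncated-Poisson stock-out probability
`P(λ, S) = (λ^S / S!) / (∑_{s=0}^{S} λ^s / s!)`. -/
noncomputable def stockout (lam : ℝ) (S : ℕ) : ℝ :=
  (lam ^ S / (Nat.factorial S : ℝ)) /
    (∑ s ∈ Finset.range (S + 1), lam ^ s / (Nat.factorial s : ℝ))

/-- Expected operational cost `C̄(k, i', S)` of assigning the injective level map `k`
of regular suppliers, expedited supplier `i'`, and base stock `S`:
`C̄(k,i',S) = h·S + d·∑_{l=1}^{L} (1−q)·q^{l−1}·[ r_{k(l)}·(1 − P(d·t_{k(l)}, S))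
 + e_{i'}·P(d·t_{k(l)}, S) ] + d·e_{i'}·q^L`. -/
noncomputable def Cbar {ι : Type*} [Fintype ι] (r t e : ι → ℝ) (d q h : ℝ) (L : ℕ)
    (k : Fin L → ι) (i' : ι) (S : ℕ) : ℝ :=
  h * S +
    d * ∑ l : Fin L, (1 - q) * q ^ (l : ℕ) *
      (r (k l) * (1 - stockout (d * t (k l)) S) + e i' * stockout (d * t (k l)) S) +
    d * e i' * q ^ L

section Stockout

variable {lam mu : ℝ}

lemma stockout_denom_pos (hlam : 0 ≤ lam) (S : ℕ) :
    0 < ∑ s ∈ Finset.range (S + 1), lam ^ s / (s.factorial : ℝ) :=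
  Finset.sum_pos' (fun _ _ => by positivity) ⟨0, by simp⟩

lemma stockout_nonneg (hlam : 0 ≤ lam) (S : ℕ) : 0 ≤ stockout lam S :=
  div_nonneg (by positivity) (stockout_denom_pos hlam S).le

lemma stockout_le_one (hlam : 0 ≤ lam) (S : ℕ) : stockout lam S ≤ 1 :=
  div_le_one_of_le₀
    (Finset.single_le_sum (f := fun s => lam ^ s / (s.factorial : ℝ))
      (fun _ _ => by positivity) (Finset.self_mem_range_succ S))
    (stockout_denom_pos hlam S).le

lemma stockout_le_stockout (hlam : 0 ≤ lam) (hlm : lam ≤ mu) (S : ℕ) :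
    stockout lam S ≤ stockout mu S := by
  have hmu : 0 ≤ mu := hlam.trans hlm
  unfold stockout
  rw [div_le_div_iff₀ (stockout_denom_pos hlam S) (stockout_denom_pos hmu S),
    Finset.mul_sum, Finset.mul_sum]
  refine Finset.sum_le_sum fun s hs => ?_
  obtain ⟨m, rfl⟩ := Nat.exists_eq_add_of_le (Finset.mem_range_succ_iff.mp hs)
  have key : lam ^ (s + m) * mu ^ s ≤ mu ^ (s + m) * lam ^ s :=
    calc lam ^ (s + m) * mu ^ s = (lam * mu) ^ s * lam ^ m := by ring
      _ ≤ (lam * mu) ^ s * mu ^ m := by gcongr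
      _ = mu ^ (s + m) * lam ^ s := by ring
  rw [div_mul_div_comm, div_mul_div_comm]
  exact div_le_div_of_nonneg_right key (by positivity)

end Stockout

section Greedy

variable {ι α : Type*} [LinearOrder α] {L : ℕ} {r : ι → α} {kstar k : Fin L → ι}

lemma le_of_greedy_of_sorted (hkstar : Monotone (r ∘ kstar))
    (hout : ∀ l, ∀ i ∉ Set.range kstar, r (kstar l) ≤ r i)
    (hk : Function.Injective k) (hksort : Monotone (r ∘ k)) (l : Fin L) :
    r (kstar l) ≤ r (k l) := by
  classical
  by_contra! hlt
  -- the `l + 1` distinct elements `k 0, …, k l` would all be among `kstar 0, …, kstar (l - 1)`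
  have hsub : (Finset.Iic l).image k ⊆ (Finset.Iio l).image kstar := by
    simp only [Finset.subset_iff, Finset.mem_image, Finset.mem_Iic, Finset.mem_Iio]
    rintro _ ⟨j, hjl, rfl⟩
    have hj : r (k j) < r (kstar l) := (hksort hjl).trans_lt hlt
    obtain ⟨m, hm⟩ : k j ∈ Set.range kstar := by
      by_contra hnot
      exact (hout l _ hnot).not_gt hj
    refine ⟨m, lt_of_not_ge fun hlm => ?_, hm⟩
    exact (hkstar hlm).not_gt (by simpa [hm] using hj)
  have := (Finset.card_le_card hsub).trans Finset.card_image_le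
  rw [Finset.card_image_of_injective _ hk, Fin.card_Iic, Fin.card_Iio] at this
  omega

lemma sum_mul_comp_le_of_greedy {w : Fin L → ℝ} {f : ι → ℝ}
    (hw0 : ∀ l, 0 ≤ w l) (hw : Antitone w) (hf : ∀ i j, r i ≤ r j → f i ≤ f j)
    (hkstar : Monotone (r ∘ kstar)) (hout : ∀ l, ∀ i ∉ Set.range kstar, r (kstar l) ≤ r i)
    (hk : Function.Injective k) :
    ∑ l, w l * f (kstar l) ≤ ∑ l, w l * f (k l) := by
  set σ := Tuple.sort (r ∘ k)
  have hsorted : Monotone (r ∘ k ∘ σ) := Tuple.monotone_sort (r ∘ k)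
  calc ∑ l, w l * f (kstar l) ≤ ∑ l, w l * f (k (σ l)) :=
        Finset.sum_le_sum fun l _ => mul_le_mul_of_nonneg_left
          (hf _ _ (le_of_greedy_of_sorted hkstar hout (hk.comp σ.injective) hsorted l)) (hw0 l)
    _ ≤ ∑ l, w l * f (k (σ (σ⁻¹ l))) :=
        (hw.antivary fun _ _ hab => hf _ _ (hsorted hab)).sum_mul_le_sum_mul_comp_perm
    _ = ∑ l, w l * f (k l) := by simp

end Greedy

section Cost

variable {ι : Type*} {r t : ι → ℝ} {d : ℝ}

noncomputable def levelCost (r t : ι → ℝ) (d e' : ℝ) (S : ℕ) (i : ι) : ℝ :=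
  r i * (1 - stockout (d * t i) S) + e' * stockout (d * t i) S

lemma levelCost_le_levelCost (hd : 0 ≤ d) (ht : ∀ i, 0 ≤ t i)
    (hcompat : ∀ i j, r i ≤ r j → t i ≤ t j) {e' : ℝ} (he : ∀ i, r i ≤ e') (S : ℕ)
    {i j : ι} (hij : r i ≤ r j) : levelCost r t d e' S i ≤ levelCost r t d e' S j := by
  have hP : stockout (d * t i) S ≤ stockout (d * t j) S :=
    stockout_le_stockout (mul_nonneg hd (ht i)) (by gcongr; exact hcompat i j hij) S
  have hP1 : stockout (d * t j) S ≤ 1 := stockout_le_one (mul_nonneg hd (ht j)) S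
  unfold levelCost
  nlinarith [he i]

variable [Fintype ι] {e : ι → ℝ} {q h : ℝ} {L : ℕ}

lemma Cbar_le_Cbar_of_greedy (hd : 0 ≤ d) (hq0 : 0 ≤ q) (hq1 : q ≤ 1) (ht : ∀ i, 0 ≤ t i)
    (hcompat : ∀ i j, r i ≤ r j → t i ≤ t j) {i' : ι} (he : ∀ i, r i ≤ e i')
    {kstar k : Fin L → ι} (hkstar : Monotone (r ∘ kstar))
    (hout : ∀ l, ∀ i ∉ Set.range kstar, r (kstar l) ≤ r i) (hk : Function.Injective k)
    (S : ℕ) : Cbar r t e d q h L kstar i' S ≤ Cbar r t e d q h L k i' S := by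
  unfold Cbar
  gcongr _ + _ * ?_ + _
  have hq : 0 ≤ 1 - q := sub_nonneg.2 hq1
  exact sum_mul_comp_le_of_greedy (f := levelCost r t d (e i') S) (fun l => by positivity)
    (fun a b hab => mul_le_mul_of_nonneg_left (pow_le_pow_of_le_one hq0 hq1 hab) hq)
    (fun _ _ => levelCost_le_levelCost hd ht hcompat he S) hkstar hout hk

lemma Cbar_le_Cbar_of_expedited_le (hd : 0 ≤ d) (hq0 : 0 ≤ q) (hq1 : q ≤ 1)
    (ht : ∀ i, 0 ≤ t i) (k : Fin L → ι) {i i' : ι} (hii' : e i ≤ e i') (S : ℕ) :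
    Cbar r t e d q h L k i S ≤ Cbar r t e d q h L k i' S := by
  unfold Cbar
  have := sub_nonneg.2 hq1
  gcongr with l
  exact stockout_nonneg (mul_nonneg hd (ht _)) S

end Cost

/-- Proposition 1: the greedy choice (cheapest expedited supplier, the `L` regular
suppliers with smallest regular costs sorted increasingly, and the best base stock
for that assignment) is a global minimizer of `C̄` over all injective level maps,
expedited suppliers, and base stocks in `{0,…,S̄}`. -/
theorem stmt_11 {ι : Type*} [Fintype ι]
    (r t e : ι → ℝ) (d q h : ℝ) (L Sbar : ℕ)
    (hd : 0 < d) (hq0 : 0 < q) (hq1 : q < 1) (hL : 1 ≤ L)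
    (ht : ∀ i, 0 < t i)
    (hcompat : ∀ i i'' : ι, r i ≤ r i'' ↔ t i ≤ t i'')
    (he : ∀ i i' : ι, r i ≤ e i')
    (istar : ι) (histar : ∀ i : ι, e istar ≤ e i)
    (kstar : Fin L → ι)
    (hkmono : Monotone fun l : Fin L => r (kstar l))
    (hkout : ∀ i : ι, i ∉ Set.range kstar → r (kstar ⟨L - 1, by omega⟩) ≤ r i)
    (Sstar : ℕ)
    (hSopt : ∀ S : ℕ, S ≤ Sbar →
      Cbar r t e d q h L kstar istar Sstar ≤ Cbar r t e d q h L kstar istar S) :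
    ∀ (k : Fin L → ι), Function.Injective k → ∀ i' : ι, ∀ S : ℕ, S ≤ Sbar →
      Cbar r t e d q h L kstar istar Sstar ≤ Cbar r t e d q h L k i' S := by
  intro k hk i' S hS
  have ht' : ∀ i, 0 ≤ t i := fun i => (ht i).le
  have hout : ∀ l, ∀ i ∉ Set.range kstar, r (kstar l) ≤ r i := fun l i hi =>
    (hkmono (Fin.mk_le_mk.mpr (by omega))).trans (hkout i hi)
  calc Cbar r t e d q h L kstar istar Sstar ≤ Cbar r t e d q h L kstar istar S := hSopt S hS
    _ ≤ Cbar r t e d q h L k istar S :=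
      Cbar_le_Cbar_of_greedy hd.le hq0.le hq1.le ht' (fun i j => (hcompat i j).mp)
        (fun i => he i istar) hkmono hout hk S
    _ ≤ Cbar r t e d q h L k i' S :=
      Cbar_le_Cbar_of_expedited_le hd.le hq0.le hq1.le ht' k (histar i') S
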